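/- Let A₁, …, A_m be pairwise commuting real d×d matrices, let ℓ ∈ ℝ^d, and define φ : ℝ^m → ℝ^d by φ(t) = (exp(−Σ_{k=1}^m t_k A_k))ᵀ ℓ. Let Ω ⊂ ℝ^m be measurable with finite positive Lebesgue measure, let Λ ⊂ ℝ^d and Γ ⊂ ℝ^m be countable, and suppose: (a) the restriction of φ to Ω is essentially injective with respect to Lebesgue measure m_Ω on Ω; (b) the pushforward φ_*(m_Ω) is a spectral measure with spectrum Λ; (c) the translates { Ω + γ : γ ∈ Γ } tile ℝ^m. Then the family { s ↦ e^{2πi φ(s−γ)·λ} 1_Ω(s−γ) : λ ∈ Λ, γ ∈ Γ } is an orthogonal basis for L²(ℝ^m). -/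

import Mathlib

open MeasureTheory Filter Set
open scoped Real ENNReal Topology

noncomputable section

/-- `e2pi t = e^{2π i t}`. -/
def e2pi (t : ℝ) : ℂ := Complex.exp (2 * Real.pi * Complex.I * t)

/-- The Euclidean dot product on `Fin d → ℝ`. -/
def dotp {d : ℕ} (a b : Fin d → ℝ) : ℝ := ∑ i, a i * b i

/-- `φ` is `μ`-essentially injective. -/
def EssInj {α β : Type*} [MeasurableSpace α] [MeasurableSpace β]
    (μ : Measure α) (φ : α → β) : Prop :=
  ∀ f : α → ℂ, MemLp f 2 μ →
    ∃ h : β → ℂ, MemLp h 2 (Measure.map φ μ) ∧ f =ᵐ[μ] fun x => h (φ x)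

/-- The family `E(Λ, φ)` is complete in `L²(μ)`. -/
def CompleteExp {α : Type*} [MeasurableSpace α] {d : ℕ}
    (μ : Measure α) (Λ : Set (Fin d → ℝ)) (φ : α → Fin d → ℝ) : Prop :=
  ∀ g : α → ℂ, MemLp g 2 μ →
    (∀ lam ∈ Λ, ∫ x, g x * (starRingEnd ℂ) (e2pi (dotp lam (φ x))) ∂μ = 0) →
    g =ᵐ[μ] 0

/-- The family `E(Λ, φ)` is an orthogonal basis of `L²(μ)`. -/
def OrthBasisExp {α : Type*} [MeasurableSpace α] {d : ℕ}
    (μ : Measure α) (Λ : Set (Fin d → ℝ)) (φ : α → Fin d → ℝ) : Prop :=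
  (∀ lam ∈ Λ, ∀ lam' ∈ Λ, lam ≠ lam' →
      ∫ x, e2pi (dotp lam (φ x)) * (starRingEnd ℂ) (e2pi (dotp lam' (φ x))) ∂μ = 0) ∧
  (∀ lam ∈ Λ, (∫ x, ‖e2pi (dotp lam (φ x))‖ ^ 2 ∂μ) ≠ 0) ∧
  CompleteExp μ Λ φ

/-- The phase function `φ(t) = (exp(−Σ t_k A_k))ᵀ ℓ`. -/
def liePhase {d m : ℕ} (A : Fin m → Matrix (Fin d) (Fin d) ℝ) (ℓ : Fin d → ℝ)
    (t : Fin m → ℝ) : Fin d → ℝ :=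
  (NormedSpace.exp (-(∑ k, t k • A k))).transpose.mulVec ℓ

/-- The generalized Gabor-type system `s ↦ e^{2π i φ(s−γ)·λ} 1_Ω(s−γ)`. -/
def genSys {d m : ℕ} (Ω : Set (Fin m → ℝ)) (φ : (Fin m → ℝ) → Fin d → ℝ)
    (lam : Fin d → ℝ) (γ : Fin m → ℝ) (s : Fin m → ℝ) : ℂ :=
  e2pi (dotp (φ (s - γ)) lam) * Set.indicator Ω (fun _ => (1 : ℂ)) (s - γ)

/-!
Translation by `γ` maps `L²(Ω)` isometrically onto `L²(Ω + γ)`, carrying `e^{2πi λ·φ}` on `Ω` to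
the system element indexed by `(λ, γ)`. By essential injectivity, composition with `φ` identifies
`L²(φ_*(m_Ω))` with `L²(m_Ω)`, so (b) makes `{e^{2πi λ·φ} : λ ∈ Λ}` an orthogonal basis of `L²(Ω)`.
Since the translates `Ω + γ` tile, these bases glue to one of `L²(ℝ^m)`.
-/

@[fun_prop]
theorem continuous_e2pi : Continuous e2pi := by
  unfold e2pi; fun_prop

theorem dotp_comm {d : ℕ} (a b : Fin d → ℝ) : dotp a b = dotp b a :=
  Finset.sum_congr rfl fun _ _ => mul_comm _ _

@[fun_prop]
theorem continuous_dotp {d : ℕ} (a : Fin d → ℝ) : Continuous (dotp a) :=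
  continuous_finsetSum _ fun i _ => continuous_const.mul (continuous_apply i)

theorem continuous_matrix_exp (d : ℕ) :
    Continuous (NormedSpace.exp : Matrix (Fin d) (Fin d) ℝ → Matrix (Fin d) (Fin d) ℝ) := by
  -- `exp` needs a normed algebra structure; the ℓ∞ operator norm induces the product topology
  let _ : NormedRing (Matrix (Fin d) (Fin d) ℝ) := Matrix.linftyOpNormedRing
  let _ : NormedAlgebra ℝ (Matrix (Fin d) (Fin d) ℝ) := Matrix.linftyOpNormedAlgebra
  let _ : NormedAlgebra ℚ (Matrix (Fin d) (Fin d) ℝ) := NormedAlgebra.restrictScalars ℚ ℝ _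
  exact NormedSpace.exp_continuous

theorem continuous_liePhase {d m : ℕ} (A : Fin m → Matrix (Fin d) (Fin d) ℝ) (ℓ : Fin d → ℝ) :
    Continuous (liePhase A ℓ) := by
  have hM : Continuous fun t : Fin m → ℝ => -(∑ k, t k • A k) := by fun_prop
  have hE := (continuous_matrix_exp d).comp hM
  exact (Continuous.matrix_transpose hE).matrix_mulVec continuous_const

section Pullback

variable {α : Type*} [MeasurableSpace α] {d : ℕ} {μ : Measure α} {Λ : Set (Fin d → ℝ)}
  {φ : α → Fin d → ℝ}

theorem CompleteExp.of_map (hφ : AEMeasurable φ μ) (hinj : EssInj μ φ)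
    (h : CompleteExp (μ.map φ) Λ id) : CompleteExp μ Λ φ := by
  intro g hg horth
  obtain ⟨k, hk, hgk⟩ := hinj g hg
  have hk0 : k =ᵐ[μ.map φ] 0 := by
    refine h k hk fun lam hlam => ?_
    simp only [id]
    have hmeas : AEStronglyMeasurable (fun y => k y * starRingEnd ℂ (e2pi (dotp lam y)))
        (μ.map φ) :=
      hk.aestronglyMeasurable.mul (by fun_prop : Continuous _).aestronglyMeasurable
    rw [← horth lam hlam, integral_map hφ hmeas]
    exact integral_congr_ae (hgk.mono fun x hx => by simp only [hx])
  exact hgk.trans (ae_of_ae_map hφ hk0)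

theorem OrthBasisExp.of_map (hφ : AEMeasurable φ μ) (hinj : EssInj μ φ)
    (h : OrthBasisExp (μ.map φ) Λ id) : OrthBasisExp μ Λ φ := by
  obtain ⟨horth, hnorm, hcomplete⟩ := h
  refine ⟨fun lam hlam lam' hlam' hne => ?_, fun lam hlam => ?_, hcomplete.of_map hφ hinj⟩
  · have hc : Continuous fun y =>
        e2pi (dotp lam (id y)) * starRingEnd ℂ (e2pi (dotp lam' (id y))) := by
      fun_prop
    have := horth lam hlam lam' hlam' hne
    rwa [integral_map hφ hc.aestronglyMeasurable] at this
  · have hc : Continuous fun y => ‖e2pi (dotp lam (id y))‖ ^ 2 := by fun_prop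
    have := hnorm lam hlam
    rwa [integral_map hφ hc.aestronglyMeasurable] at this

end Pullback

section Translates

variable {G E : Type*} [MeasurableSpace G] [AddGroup G] [MeasurableAdd G]
  {μ : Measure G} [μ.IsAddRightInvariant] {Ω : Set G}

theorem integral_indicator_comp_sub_right [NormedAddCommGroup E] [NormedSpace ℝ E]
    (hΩ : MeasurableSet Ω) (F : G → E) (γ : G) :
    ∫ s, Ω.indicator F (s - γ) ∂μ = ∫ x in Ω, F x ∂μ := by
  rw [integral_sub_right_eq_self (Ω.indicator F) γ, integral_indicator hΩ]

theorem restrict_image_add_right (γ : G) :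
    μ.restrict ((· + γ) '' Ω) = (μ.restrict Ω).map (· + γ) := by
  conv_rhs => rw [← preimage_image_eq Ω (add_left_injective γ),
    ← (measurableEmbedding_addRight γ).restrict_map, map_add_right_eq_self]

theorem ae_eq_zero_of_translates_ae_eq_zero [Zero E] {Γ : Set G} (hΓ : Γ.Countable)
    (hcover : μ (univ \ ⋃ γ ∈ Γ, (· + γ) '' Ω) = 0) {g : G → E}
    (hg : ∀ γ ∈ Γ, (fun x => g (x + γ)) =ᵐ[μ.restrict Ω] 0) : g =ᵐ[μ] 0 := by
  have hμ : μ.restrict (⋃ γ ∈ Γ, (· + γ) '' Ω) = μ :=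
    Measure.restrict_eq_self_of_ae_mem
      (by rwa [ae_iff, ← compl_ofPred, ofPred_mem_eq, compl_eq_univ_sdiff])
  rw [← hμ]
  refine (ae_restrict_biUnion_iff _ hΓ _).2 fun γ hγ => ?_
  rw [restrict_image_add_right, (measurableEmbedding_addRight γ).ae_map_iff]
  exact hg γ hγ

end Translates

section System

variable {d m : ℕ} {Ω : Set (Fin m → ℝ)} {φ : (Fin m → ℝ) → Fin d → ℝ}

theorem genSys_eq_indicator (lam : Fin d → ℝ) (γ s : Fin m → ℝ) :
    genSys Ω φ lam γ s = Ω.indicator (fun x => e2pi (dotp lam (φ x))) (s - γ) := by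
  by_cases h : s - γ ∈ Ω <;> simp [genSys, h, dotp_comm]

theorem integral_mul_conj_genSys (hΩ : MeasurableSet Ω) (g : (Fin m → ℝ) → ℂ)
    (lam : Fin d → ℝ) (γ : Fin m → ℝ) :
    ∫ s, g s * starRingEnd ℂ (genSys Ω φ lam γ s) =
      ∫ x in Ω, g (x + γ) * starRingEnd ℂ (e2pi (dotp lam (φ x))) := by
  rw [← integral_indicator_comp_sub_right hΩ _ γ]
  congr with s
  by_cases h : s - γ ∈ Ω <;> simp [genSys_eq_indicator, h]

theorem integral_genSys_mul_conj_genSys (hΩ : MeasurableSet Ω) (lam lam' : Fin d → ℝ)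
    (γ : Fin m → ℝ) :
    ∫ s, genSys Ω φ lam γ s * starRingEnd ℂ (genSys Ω φ lam' γ s) =
      ∫ x in Ω, e2pi (dotp lam (φ x)) * starRingEnd ℂ (e2pi (dotp lam' (φ x))) := by
  rw [integral_mul_conj_genSys hΩ]
  refine setIntegral_congr_fun hΩ fun x hx => ?_
  simp [genSys_eq_indicator, hx]

theorem integral_norm_genSys_sq (hΩ : MeasurableSet Ω) (lam : Fin d → ℝ) (γ : Fin m → ℝ) :
    ∫ s, ‖genSys Ω φ lam γ s‖ ^ 2 = ∫ x in Ω, ‖e2pi (dotp lam (φ x))‖ ^ 2 := by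
  rw [← integral_indicator_comp_sub_right hΩ _ γ]
  congr with s
  by_cases h : s - γ ∈ Ω <;> simp [genSys_eq_indicator, h]

theorem genSys_mul_conj_genSys_ae_eq_zero {lam lam' : Fin d → ℝ} {γ γ' : Fin m → ℝ}
    (h : volume ((· + γ) '' Ω ∩ (· + γ') '' Ω) = 0) :
    (fun s => genSys Ω φ lam γ s * starRingEnd ℂ (genSys Ω φ lam' γ' s)) =ᵐ[volume] 0 := by
  filter_upwards [measure_eq_zero_iff_ae_notMem.mp h] with s hs
  simp only [image_add_right, mem_inter_iff, mem_preimage, not_and_or, ← sub_eq_add_neg] at hs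
  rcases hs with hs | hs <;> simp [genSys_eq_indicator, hs]

end System

theorem statement18_general {d m : ℕ} (A : Fin m → Matrix (Fin d) (Fin d) ℝ)
    (ℓ : Fin d → ℝ)
    (φ : (Fin m → ℝ) → Fin d → ℝ) (hφ : φ = liePhase A ℓ)
    (Ω : Set (Fin m → ℝ)) (hΩm : MeasurableSet Ω)
    (Λ : Set (Fin d → ℝ))
    (Γ : Set (Fin m → ℝ)) (hΓ : Γ.Countable)
    (ha : EssInj (volume.restrict Ω) φ)
    (hb : OrthBasisExp (Measure.map φ (volume.restrict Ω)) Λ id)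
    (hc₁ : ∀ γ ∈ Γ, ∀ γ' ∈ Γ, γ ≠ γ' →
      volume (((fun x => x + γ) '' Ω) ∩ ((fun x => x + γ') '' Ω)) = 0)
    (hc₂ : volume (Set.univ \ ⋃ γ ∈ Γ, (fun x => x + γ) '' Ω) = 0) :
    (∀ lam ∈ Λ, ∀ γ ∈ Γ, ∀ lam' ∈ Λ, ∀ γ' ∈ Γ, (lam, γ) ≠ (lam', γ') →
        ∫ s, genSys Ω φ lam γ s * (starRingEnd ℂ) (genSys Ω φ lam' γ' s) = 0) ∧
    (∀ lam ∈ Λ, ∀ γ ∈ Γ, (∫ s, ‖genSys Ω φ lam γ s‖ ^ 2) ≠ 0) ∧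
    (∀ g : (Fin m → ℝ) → ℂ, MemLp g 2 volume →
      (∀ lam ∈ Λ, ∀ γ ∈ Γ, ∫ s, g s * (starRingEnd ℂ) (genSys Ω φ lam γ s) = 0) →
      g =ᵐ[volume] 0) := by
  have hφm : AEMeasurable φ (volume.restrict Ω) :=
    (hφ ▸ continuous_liePhase A ℓ).measurable.aemeasurable
  obtain ⟨horth, hnorm, hcomplete⟩ := hb.of_map hφm ha
  refine ⟨fun lam hlam γ hγ lam' hlam' γ' hγ' hne => ?_, fun lam hlam γ _ => ?_,
    fun g hg hgorth => ?_⟩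
  · by_cases hγγ' : γ = γ'
    · subst hγγ'
      rw [integral_genSys_mul_conj_genSys hΩm]
      exact horth lam hlam lam' hlam' fun h => hne (by rw [h])
    · exact integral_eq_zero_of_ae (genSys_mul_conj_genSys_ae_eq_zero (hc₁ γ hγ γ' hγ' hγγ'))
  · rw [integral_norm_genSys_sq hΩm]
    exact hnorm lam hlam
  · refine ae_eq_zero_of_translates_ae_eq_zero hΓ hc₂ fun γ hγ => hcomplete _ ?_ fun lam hlam => ?_
    · exact (hg.comp_measurePreserving (measurePreserving_add_right volume γ)).restrict Ω
    · rw [← integral_mul_conj_genSys hΩm]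
      exact hgorth lam hlam γ hγ

/-- Discretization of a unitary representation: if `φ(t) = (exp(−Σ t_k A_k))ᵀ ℓ`
(with `A₁,…,A_m` pairwise commuting), `φ` is essentially injective on `Ω`, the pushforward
`φ⋆(m_Ω)` is a spectral measure with spectrum `Λ`, and the translates `Ω + γ`, `γ ∈ Γ`, tile
`ℝ^m`, then `{ s ↦ e^{2π i φ(s−γ)·λ} 1_Ω(s−γ) : λ ∈ Λ, γ ∈ Γ }` is an orthogonal basis of
`L²(ℝ^m)`. -/
theorem statement18 {d m : ℕ} (A : Fin m → Matrix (Fin d) (Fin d) ℝ)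
    (hcomm : ∀ i j, A i * A j = A j * A i) (ℓ : Fin d → ℝ)
    (φ : (Fin m → ℝ) → Fin d → ℝ) (hφ : φ = liePhase A ℓ)
    (Ω : Set (Fin m → ℝ)) (hΩm : MeasurableSet Ω)
    (hΩpos : 0 < volume Ω) (hΩfin : volume Ω < ⊤)
    (Λ : Set (Fin d → ℝ)) (hΛ : Λ.Countable)
    (Γ : Set (Fin m → ℝ)) (hΓ : Γ.Countable)
    (ha : EssInj (volume.restrict Ω) φ)
    (hb : OrthBasisExp (Measure.map φ (volume.restrict Ω)) Λ id)
    (hc₁ : ∀ γ ∈ Γ, ∀ γ' ∈ Γ, γ ≠ γ' →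
      volume (((fun x => x + γ) '' Ω) ∩ ((fun x => x + γ') '' Ω)) = 0)
    (hc₂ : volume (Set.univ \ ⋃ γ ∈ Γ, (fun x => x + γ) '' Ω) = 0) :
    (∀ lam ∈ Λ, ∀ γ ∈ Γ, ∀ lam' ∈ Λ, ∀ γ' ∈ Γ, (lam, γ) ≠ (lam', γ') →
        ∫ s, genSys Ω φ lam γ s * (starRingEnd ℂ) (genSys Ω φ lam' γ' s) = 0) ∧
    (∀ lam ∈ Λ, ∀ γ ∈ Γ, (∫ s, ‖genSys Ω φ lam γ s‖ ^ 2) ≠ 0) ∧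
    (∀ g : (Fin m → ℝ) → ℂ, MemLp g 2 volume →
      (∀ lam ∈ Λ, ∀ γ ∈ Γ, ∫ s, g s * (starRingEnd ℂ) (genSys Ω φ lam γ s) = 0) →
      g =ᵐ[volume] 0) :=
  statement18_general A ℓ φ hφ Ω hΩm Λ Γ hΓ ha hb hc₁ hc₂
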